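/- arXiv:2603.20814 — 4 statements merged into one kernel-verified Lean document; each statement's English description precedes it below -/
import Mathlib

section
/- Let p > 1 and let G be a finite simple connected graph on n ≥ 4 vertices whose boundary B(G) (the set of vertices of degree one) is nonempty. Then λ_{1,p}(G) ≥ λ_{1,p}(T_{n,3}), where T_{n,3} is the tadpole graph on n vertices with head of size 3. -/
/-!
Sort the vertices by `|f|`, with sorted values `b 0 ≤ ⋯ ≤ b m` (`m = n - 1`); `b 0 = 0` because
`f` vanishes at a leaf. Transplanting `|f|` to `T_{n,3}` in decreasing order from the head to the
end of the tail keeps `∑ |f| ^ p` and has energy `(b m - b (m-2)) ^ p + ∑ₖ (b (k+1) - b k) ^ p`.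
By connectivity every gap `b (k+1) - b k` is spanned by an edge of `G`, and since `x ↦ x ^ p` is
superadditive an edge can pay for several disjoint blocks of the gaps it spans. The top vertex is
interior, so it has two neighbours: one edge to them pays for the block `{m-2, m-1}`, the other for
the gap `m-1`, and the gap `m-2`, if positive, is paid by an edge from the second highest vertex
that avoids the top one.
-/

open scoped Classical

noncomputable section

/-- The term `|f x - f y| ^ p` as a function on unordered pairs. -/
noncomputable def edgeTerm {V : Type*} (p : ℝ) (f : V → ℝ) : Sym2 V → ℝ :=
  Sym2.lift ⟨fun x y => |f x - f y| ^ p, fun x y => by dsimp only; rw [abs_sub_comm]⟩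

/-- The `p`-Rayleigh quotient of a function on a finite graph. -/
noncomputable def rayleigh {V : Type*} [Fintype V] [DecidableEq V] (G : SimpleGraph V)
    (p : ℝ) (f : V → ℝ) : ℝ :=
  (∑ e ∈ G.edgeFinset, edgeTerm p f e) / ∑ v, |f v| ^ p

/-- The first `p`-Dirichlet eigenvalue: infimum of the Rayleigh quotient over nonzero
functions vanishing on the boundary (vertices of degree one). -/
noncomputable def lambda1 {V : Type*} [Fintype V] [DecidableEq V] (G : SimpleGraph V)
    (p : ℝ) : ℝ :=
  sInf {r | ∃ f : V → ℝ, f ≠ 0 ∧ (∀ v, G.degree v = 1 → f v = 0) ∧ r = rayleigh G p f}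

/-- The tadpole graph `T_{n,i}` on vertices `0,…,n-1` (vertex `t_k` is `k-1`):
edges `t_k t_{k+1}` for `1 ≤ k ≤ n-1` together with the edge `t_1 t_i`. -/
def tadpole (n i : ℕ) : SimpleGraph (Fin n) :=
  SimpleGraph.fromRel (fun a b => a.val + 1 = b.val ∨ (a.val = 0 ∧ b.val = i - 1))

/-- The path graph on `n` vertices `0,…,n-1`. -/
def pathG (n : ℕ) : SimpleGraph (Fin n) :=
  SimpleGraph.fromRel (fun a b : Fin n => a.val + 1 = b.val)

/-- The set of edges of `G` with exactly one endpoint in `U`. -/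
noncomputable def crossEdges {V : Type*} [Fintype V] [DecidableEq V] (G : SimpleGraph V)
    (U : Finset V) : Finset (Sym2 V) :=
  G.edgeFinset.filter fun e =>
    Sym2.lift ⟨fun x y => (x ∈ U ∧ y ∉ U) ∨ (x ∉ U ∧ y ∈ U),
      fun x y => by simp only [eq_iff_iff]; tauto⟩ e

/-- The Dirichlet Cheeger constant: infimum of `|E(U,Uᶜ)|/|U|` over nonempty sets `U`
of interior vertices (vertices of degree at least two). -/
noncomputable def dCheeger {V : Type*} [Fintype V] [DecidableEq V] (G : SimpleGraph V) : ℝ :=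
  sInf {r | ∃ U : Finset V, U.Nonempty ∧ (∀ v ∈ U, 2 ≤ G.degree v) ∧
    r = ((crossEdges G U).card : ℝ) / U.card}

open Finset

lemma edgeTerm_nonneg {V : Type*} (p : ℝ) (f : V → ℝ) (e : Sym2 V) : 0 ≤ edgeTerm p f e := by
  induction e using Sym2.ind with
  | _ x y => exact Real.rpow_nonneg (abs_nonneg _) _

section Rayleigh

variable {V W : Type*} [Fintype V] [DecidableEq V] [Fintype W] [DecidableEq W]

lemma rayleigh_nonneg (G : SimpleGraph V) (p : ℝ) (f : V → ℝ) : 0 ≤ rayleigh G p f :=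
  div_nonneg (sum_nonneg fun e _ => edgeTerm_nonneg p f e)
    (sum_nonneg fun _ _ => Real.rpow_nonneg (abs_nonneg _) _)

lemma lambda1_le_rayleigh {G : SimpleGraph V} {p : ℝ} {f : V → ℝ} (hf : f ≠ 0)
    (hfb : ∀ v, G.degree v = 1 → f v = 0) : lambda1 G p ≤ rayleigh G p f :=
  csInf_le ⟨0, by rintro _ ⟨g, -, -, rfl⟩; exact rayleigh_nonneg G p g⟩ ⟨f, hf, hfb, rfl⟩

theorem lambda1_le_lambda1_of_forall_exists_rayleigh_le {G : SimpleGraph V} {H : SimpleGraph W}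
    {p : ℝ} (hG : ∃ v, G.degree v ≠ 1)
    (h : ∀ f : V → ℝ, f ≠ 0 → (∀ v, G.degree v = 1 → f v = 0) →
      ∃ g : W → ℝ, g ≠ 0 ∧ (∀ w, H.degree w = 1 → g w = 0) ∧ rayleigh H p g ≤ rayleigh G p f) :
    lambda1 H p ≤ lambda1 G p := by
  obtain ⟨v, hv⟩ := hG
  refine le_csInf ⟨_, Pi.single v 1, by simp, fun u hu => ?_, rfl⟩ ?_
  · exact Pi.single_eq_of_ne (by rintro rfl; exact hv hu) _
  · rintro _ ⟨f, hf, hfb, rfl⟩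
    obtain ⟨g, hg, hgb, hle⟩ := h f hf hfb
    exact (lambda1_le_rayleigh hg hgb).trans hle

end Rayleigh

section Superadditivity

variable {ι κ : Type*} {p : ℝ}

theorem Real.sum_rpow_le_rpow_sum {s : Finset ι} {x : ι → ℝ} (hx : ∀ i ∈ s, 0 ≤ x i)
    (hp : 1 ≤ p) : ∑ i ∈ s, x i ^ p ≤ (∑ i ∈ s, x i) ^ p := by
  induction s using Finset.induction_on with
  | empty => simp [Real.zero_rpow (by linarith : p ≠ 0)]
  | insert a s ha ih =>
    rw [sum_insert ha, sum_insert ha]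
    rw [forall_mem_insert] at hx
    calc x a ^ p + ∑ i ∈ s, x i ^ p ≤ x a ^ p + (∑ i ∈ s, x i) ^ p := by grw [ih hx.2]
      _ ≤ (x a + ∑ i ∈ s, x i) ^ p := Real.add_rpow_le_rpow_add hx.1 (sum_nonneg hx.2) hp

theorem sum_rpow_sum_le_rpow_sum_of_pairwiseDisjoint [DecidableEq κ] {s : Finset ι}
    {C : ι → Finset κ} {T : Finset κ} {w : κ → ℝ} (hw : ∀ k, 0 ≤ w k) (hC : ∀ i ∈ s, C i ⊆ T)
    (hdisj : (s : Set ι).PairwiseDisjoint C) (hp : 1 ≤ p) :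
    ∑ i ∈ s, (∑ k ∈ C i, w k) ^ p ≤ (∑ k ∈ T, w k) ^ p :=
  calc ∑ i ∈ s, (∑ k ∈ C i, w k) ^ p ≤ (∑ i ∈ s, ∑ k ∈ C i, w k) ^ p :=
        Real.sum_rpow_le_rpow_sum (fun i _ => sum_nonneg fun k _ => hw k) hp
    _ = (∑ k ∈ s.biUnion C, w k) ^ p := by rw [sum_biUnion hdisj]
    _ ≤ (∑ k ∈ T, w k) ^ p :=
        Real.rpow_le_rpow (sum_nonneg fun k _ => hw k)
          (sum_le_sum_of_subset_of_nonneg (biUnion_subset.2 hC) fun k _ _ => hw k) (by linarith)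

theorem sum_rpow_sum_le_of_blocks {ε : Type*} [DecidableEq ε] [DecidableEq κ] {D : Finset ι}
    {E : Finset ε} {edge : ι → ε} (hedge : ∀ i ∈ D, edge i ∈ E) {L : ε → Finset κ}
    {C : ι → Finset κ} (hC : ∀ i ∈ D, C i ⊆ L (edge i))
    (hdisj : ∀ i ∈ D, ∀ j ∈ D, i ≠ j → edge i = edge j → Disjoint (C i) (C j))
    {w : κ → ℝ} (hw : ∀ k, 0 ≤ w k) (hp : 1 ≤ p) :
    ∑ i ∈ D, (∑ k ∈ C i, w k) ^ p ≤ ∑ e ∈ E, (∑ k ∈ L e, w k) ^ p := by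
  rw [← sum_fiberwise_of_maps_to hedge]
  refine sum_le_sum fun e _ => sum_rpow_sum_le_rpow_sum_of_pairwiseDisjoint hw ?_ ?_ hp
  · intro i hi
    obtain ⟨hiD, rfl⟩ := mem_filter.1 hi
    exact hC i hiD
  · intro i hi j hj hij
    simp only [coe_filter, Set.mem_ofPred_eq] at hi hj
    exact hdisj i hi.1 j hj.1 hij (hi.2.trans hj.2.symm)

theorem rpow_sum_add_sum_rpow_le {ε : Type*} [DecidableEq ε] [DecidableEq κ] {E : Finset ε}
    {L : ε → Finset κ} {w : κ → ℝ} (hw : ∀ k, 0 ≤ w k) {B S : Finset κ} {e₀ : ε} (he₀ : e₀ ∈ E)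
    (hB : B ⊆ L e₀) (hS : ∀ k ∈ S, ∃ e ∈ E, k ∈ L e ∧ (k ∈ B → e ≠ e₀)) (hp : 1 ≤ p) :
    (∑ k ∈ B, w k) ^ p + ∑ k ∈ S, w k ^ p ≤ ∑ e ∈ E, (∑ k ∈ L e, w k) ^ p := by
  have : Nonempty ε := ⟨e₀⟩
  choose! edge hedgeE hedgeL hedgeB using hS
  refine le_of_eq_of_le ?_ (sum_rpow_sum_le_of_blocks (D := insertNone S) (E := E)
    (edge := fun o => o.elim e₀ edge) (C := fun o => o.elim B singleton) ?_ ?_ ?_ hw hp)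
  · simp [sum_insertNone]
  · rintro (_ | k) hk
    · exact he₀
    · exact hedgeE k (by simpa using hk)
  · rintro (_ | k) hk
    · exact hB
    · simpa using hedgeL k (by simpa using hk)
  · rintro (_ | k) hk (_ | k') hk' hne heq
    · exact absurd rfl hne
    · exact disjoint_singleton_right.2 fun hkB => hedgeB k' (by simpa using hk') hkB heq.symm
    · exact disjoint_singleton_left.2 fun hkB => hedgeB k (by simpa using hk) hkB heq
    · exact disjoint_singleton.2 fun h => hne (by rw [h])

end Superadditivity

section Levels

variable {V : Type*}

/-- Level `k` is the gap between the vertices of ranks `k` and `k + 1`. -/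
def levelsCrossed (r : V → ℕ) : Sym2 V → Finset ℕ :=
  Sym2.lift ⟨fun x y => Ico (min (r x) (r y)) (max (r x) (r y)), fun x y => by
    dsimp only; rw [min_comm, max_comm]⟩

lemma mem_levelsCrossed {r : V → ℕ} {x y : V} {k : ℕ} (hx : r x ≤ k) (hy : k < r y) :
    k ∈ levelsCrossed r s(x, y) := by
  simp only [levelsCrossed, Sym2.lift_mk, mem_Ico]
  omega

lemma edgeTerm_comp_eq_rpow_sum_levelsCrossed {b : ℕ → ℝ} (hb : Monotone b) (r : V → ℕ)
    (p : ℝ) (e : Sym2 V) :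
    edgeTerm p (fun v => b (r v)) e = (∑ k ∈ levelsCrossed r e, (b (k + 1) - b k)) ^ p := by
  induction e using Sym2.ind with
  | _ x y =>
    simp only [edgeTerm, levelsCrossed, Sym2.lift_mk]
    rw [sum_Ico_sub b min_le_max]
    rcases le_total (r x) (r y) with h | h
    · rw [min_eq_left h, max_eq_right h, abs_sub_comm, abs_of_nonneg (sub_nonneg.2 (hb h))]
    · rw [min_eq_right h, max_eq_left h, abs_of_nonneg (sub_nonneg.2 (hb h))]

lemma edgeTerm_abs_le {p : ℝ} (hp : 0 ≤ p) (f : V → ℝ) (e : Sym2 V) :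
    edgeTerm p (fun v => |f v|) e ≤ edgeTerm p f e := by
  induction e using Sym2.ind with
  | _ x y => exact Real.rpow_le_rpow (abs_nonneg _) (abs_abs_sub_abs_le_abs_sub _ _) hp

variable {G : SimpleGraph V}

lemma exists_adj_ne_of_one_lt_degree [Fintype V] {v : V} (h : 1 < G.degree v) (u : V) :
    ∃ w, G.Adj v w ∧ w ≠ u := by
  rw [← G.card_neighborFinset_eq_degree, one_lt_card_iff_nontrivial] at h
  obtain ⟨w, hw, hwu⟩ := h.exists_ne u
  exact ⟨w, (G.mem_neighborFinset v w).1 hw, hwu⟩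

lemma exists_degree_ne_one [Fintype V] [DecidableEq V] (hconn : G.Connected)
    (h : 3 ≤ Fintype.card V) : ∃ v, G.degree v ≠ 1 := by
  by_contra! hall
  have hsum := G.sum_degrees_eq_twice_card_edges
  have htree := hconn.card_vert_le_card_edgeSet_add_one
  simp only [hall, sum_const, card_univ, smul_eq_mul, mul_one] at hsum
  rw [Nat.card_eq_fintype_card, Nat.card_eq_fintype_card, ← G.edgeFinset_card] at htree
  omega

lemma exists_edge_mem_levelsCrossed [Fintype V] [DecidableEq V] (hconn : G.Connected) {m : ℕ}
    (r : V ≃ Fin (m + 1)) {k : ℕ} (hk : k < m) :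
    ∃ e ∈ G.edgeFinset, k ∈ levelsCrossed (fun v => (r v : ℕ)) e := by
  obtain ⟨w⟩ := hconn.preconnected (r.symm 0) (r.symm (Fin.last m))
  obtain ⟨d, -, hd₁, hd₂⟩ :=
    w.exists_boundary_dart {v | (r v : ℕ) ≤ k} (by simp) (by simpa using hk)
  exact ⟨s(d.fst, d.snd), G.mem_edgeFinset.2 d.adj, mem_levelsCrossed hd₁ (not_le.1 hd₂)⟩

end Levels

section Energy

variable {V : Type*} [Fintype V] [DecidableEq V] {G : SimpleGraph V} {m : ℕ}
  (r : V ≃ Fin (m + 1)) {b : ℕ → ℝ}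

/-- The edge `s(u, top)` is reserved for the block of levels `{m - 2, m - 1}`. -/
lemma exists_edge_crossing_level (hconn : G.Connected) (hm : 2 ≤ m) (hb : Monotone b)
    (hb0 : 0 ≤ b 0) (hdeg : ∀ v, 0 < b (r v) → 2 ≤ G.degree v) (u : V) {k : ℕ} (hk : k < m)
    (hgap : b k < b (k + 1)) :
    ∃ e ∈ G.edgeFinset, k ∈ levelsCrossed (fun v => (r v : ℕ)) e ∧
      (m - 2 ≤ k → e ≠ s(u, r.symm (Fin.last m))) := by
  set v₁ := r.symm (Fin.last m)
  have hrv₁ : (r v₁ : ℕ) = m := by simp [v₁]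
  have hpos : 0 < b (k + 1) := (hb0.trans (hb k.zero_le)).trans_lt hgap
  by_cases hk₁ : k = m - 1
  · obtain ⟨w, hw, hwu⟩ :=
      exists_adj_ne_of_one_lt_degree (hdeg v₁ (by rwa [hrv₁, show m = k + 1 by omega])) u
    have hrw : (r w : ℕ) ≠ m := fun h => hw.ne' (r.injective (Fin.ext (by rw [h, hrv₁])))
    refine ⟨s(w, v₁), G.mem_edgeFinset.2 hw.symm, mem_levelsCrossed ?_ (by omega),
      fun _ h => hwu (Sym2.congr_left.1 h)⟩
    have := Fin.is_le (r w)
    omega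
  by_cases hk₂ : k = m - 2
  · set v₂ := r.symm ⟨m - 1, by omega⟩
    have hrv₂ : (r v₂ : ℕ) = m - 1 := by simp [v₂]
    obtain ⟨w, hw, hwv₁⟩ :=
      exists_adj_ne_of_one_lt_degree (hdeg v₂ (by rwa [hrv₂, show m - 1 = k + 1 by omega])) v₁
    have hrw₁ : (r w : ℕ) ≠ m := fun h => hwv₁ (r.injective (Fin.ext (by rw [h, hrv₁])))
    have hrw₂ : (r w : ℕ) ≠ m - 1 := fun h => hw.ne' (r.injective (Fin.ext (by rw [h, hrv₂])))
    refine ⟨s(w, v₂), G.mem_edgeFinset.2 hw.symm, mem_levelsCrossed ?_ (by omega), fun _ h => ?_⟩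
    · have := Fin.is_le (r w)
      omega
    · rcases Sym2.eq_iff.1 h with ⟨-, h⟩ | ⟨h, -⟩
      · exact absurd (congrArg (fun v => (r v : ℕ)) h) (by simp only [hrv₁, hrv₂]; omega)
      · exact hwv₁ h
  obtain ⟨e, he, hke⟩ := exists_edge_mem_levelsCrossed hconn r hk
  exact ⟨e, he, hke, fun h => absurd h (by omega)⟩

theorem rpow_add_sum_rpow_le_energy (hconn : G.Connected) (hm : 2 ≤ m) (hb : Monotone b)
    (hb0 : 0 ≤ b 0) (hdeg : ∀ v, 0 < b (r v) → 2 ≤ G.degree v) (htop : 0 < b m) {p : ℝ}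
    (hp : 1 ≤ p) :
    (b m - b (m - 2)) ^ p + ∑ k ∈ range m, (b (k + 1) - b k) ^ p ≤
      ∑ e ∈ G.edgeFinset, edgeTerm p (fun v => b (r v)) e := by
  set v₁ := r.symm (Fin.last m)
  have hrv₁ : (r v₁ : ℕ) = m := by simp [v₁]
  obtain ⟨u, hu, huv₂⟩ := exists_adj_ne_of_one_lt_degree (hdeg v₁ (by rwa [hrv₁]))
    (r.symm ⟨m - 1, by omega⟩)
  have hru : (r u : ℕ) ≤ m - 2 := by
    have h₁ : (r u : ℕ) ≠ m := fun h => hu.ne' (r.injective (Fin.ext (by rw [h, hrv₁])))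
    have h₂ : (r u : ℕ) ≠ m - 1 := fun h => huv₂ (r.injective (Fin.ext (by simp [h])))
    have := Fin.is_le (r u)
    omega
  have hgap (k : ℕ) : 0 ≤ b (k + 1) - b k := sub_nonneg.2 (hb k.le_succ)
  have hB : {m - 2, m - 1} ⊆ levelsCrossed (fun v => (r v : ℕ)) s(u, v₁) := by
    intro k hk
    simp only [mem_insert, mem_singleton] at hk
    exact mem_levelsCrossed (by omega) (by omega)
  have hS : ∀ k ∈ (range m).filter (fun k => b k < b (k + 1)), ∃ e ∈ G.edgeFinset,
      k ∈ levelsCrossed (fun v => (r v : ℕ)) e ∧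
        (k ∈ ({m - 2, m - 1} : Finset ℕ) → e ≠ s(u, v₁)) := by
    intro k hk
    rw [mem_filter, mem_range] at hk
    obtain ⟨e, he, hke, hne⟩ := exists_edge_crossing_level r hconn hm hb hb0 hdeg u hk.1 hk.2
    refine ⟨e, he, hke, fun hkB => hne ?_⟩
    simp only [mem_insert, mem_singleton] at hkB
    omega
  calc (b m - b (m - 2)) ^ p + ∑ k ∈ range m, (b (k + 1) - b k) ^ p
      = (∑ k ∈ {m - 2, m - 1}, (b (k + 1) - b k)) ^ p +
          ∑ k ∈ (range m).filter (fun k => b k < b (k + 1)), (b (k + 1) - b k) ^ p := by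
        congr 1
        · rw [sum_pair (by omega), show m - 2 + 1 = m - 1 by omega, show m - 1 + 1 = m by omega,
            sub_add_sub_cancel']
        · refine (sum_filter_of_ne fun k _ h => lt_of_le_of_ne (hb k.le_succ) fun heq => h ?_).symm
          rw [heq, sub_self, Real.zero_rpow (by linarith)]
    _ ≤ ∑ e ∈ G.edgeFinset, (∑ k ∈ levelsCrossed (fun v => (r v : ℕ)) e, (b (k + 1) - b k)) ^ p :=
        rpow_sum_add_sum_rpow_le hgap (G.mem_edgeFinset.2 hu.symm) hB hS hp
    _ = ∑ e ∈ G.edgeFinset, edgeTerm p (fun v => b (r v)) e :=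
        sum_congr rfl fun e _ => (edgeTerm_comp_eq_rpow_sum_levelsCrossed hb _ p e).symm

end Energy

section Tadpole

variable {m : ℕ}

lemma tadpole_adj {n i : ℕ} {a c : Fin n} : (tadpole n i).Adj a c ↔ a ≠ c ∧
    ((a.val + 1 = c.val ∨ (a.val = 0 ∧ c.val = i - 1)) ∨
      (c.val + 1 = a.val ∨ (c.val = 0 ∧ a.val = i - 1))) :=
  SimpleGraph.fromRel_adj _ _ _

lemma eq_last_of_tadpole_degree_eq_one (hm : 3 ≤ m) {t : Fin (m + 1)}
    (h : (tadpole (m + 1) 3).degree t = 1) : t = Fin.last m := by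
  by_contra ht
  have ht' : (t : ℕ) < m := Fin.val_lt_last ht
  clear ht
  have : 1 < (tadpole (m + 1) 3).degree t := by
    rw [← SimpleGraph.card_neighborFinset_eq_degree, one_lt_card_iff]
    refine ⟨⟨t + 1, by omega⟩, if (t : ℕ) = 0 then ⟨2, by omega⟩ else ⟨t - 1, by omega⟩,
      ?_, ?_, ?_⟩
    all_goals (try rw [SimpleGraph.mem_neighborFinset, tadpole_adj])
    all_goals (try split_ifs) <;> simp only [ne_eq, Fin.ext_iff, and_true, true_or] <;> omega
  omega

lemma tadpole_edgeFinset_subset (hm : 2 ≤ m) : (tadpole (m + 1) 3).edgeFinset ⊆ univ.image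
    (fun o : Option (Fin m) => o.elim s(0, ⟨2, by omega⟩) fun k => s(k.castSucc, k.succ)) := by
  intro e he
  induction e using Sym2.ind with
  | _ a c =>
    rw [SimpleGraph.mem_edgeFinset, SimpleGraph.mem_edgeSet, tadpole_adj] at he
    simp only [mem_image, mem_univ, true_and, Option.exists, Option.elim_none, Option.elim_some]
    have path (x y : Fin (m + 1)) (h : x.val + 1 = y.val) :
        ∃ k : Fin m, s(k.castSucc, k.succ) = s(x, y) :=
      ⟨⟨x, by omega⟩, Sym2.eq_iff.2 (Or.inl ⟨Fin.ext rfl, Fin.ext h⟩)⟩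
    have head (x y : Fin (m + 1)) (h : x.val = 0 ∧ y.val = 3 - 1) : s(0, ⟨2, by omega⟩) = s(x, y) :=
      Sym2.eq_iff.2 (Or.inl ⟨Fin.ext h.1.symm, Fin.ext h.2.symm⟩)
    rcases he.2 with (h | h) | (h | h)
    · exact Or.inr (path a c h)
    · exact Or.inl (head a c h)
    · exact Or.inr (Sym2.eq_swap (a := a) ▸ path c a h)
    · exact Or.inl (Sym2.eq_swap (a := a) ▸ head c a h)

theorem tadpole_energy_le (hm : 2 ≤ m) {b : ℕ → ℝ} (hb : Monotone b) (p : ℝ) :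
    ∑ e ∈ (tadpole (m + 1) 3).edgeFinset, edgeTerm p (fun t : Fin (m + 1) => b (m - t)) e ≤
      (b m - b (m - 2)) ^ p + ∑ k ∈ range m, (b (k + 1) - b k) ^ p := by
  set g := fun t : Fin (m + 1) => b (m - t)
  have hpath (k : Fin m) :
      edgeTerm p g s(k.castSucc, k.succ) = (b (m - 1 - k + 1) - b (m - 1 - k)) ^ p := by
    simp only [edgeTerm, Sym2.lift_mk, g, Fin.val_castSucc, Fin.val_succ]
    rw [show m - (k + 1) = m - 1 - k by omega, show m - k = m - 1 - k + 1 by omega,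
      abs_of_nonneg (sub_nonneg.2 (hb (Nat.le_succ _)))]
  have hhead : edgeTerm p g s(0, ⟨2, by omega⟩) = (b m - b (m - 2)) ^ p := by
    simp only [edgeTerm, Sym2.lift_mk, g, Fin.val_zero, Nat.sub_zero]
    rw [abs_of_nonneg (sub_nonneg.2 (hb (Nat.sub_le m 2)))]
  calc ∑ e ∈ (tadpole (m + 1) 3).edgeFinset, edgeTerm p g e
      ≤ ∑ o : Option (Fin m),
          edgeTerm p g (o.elim s(0, ⟨2, by omega⟩) fun k => s(k.castSucc, k.succ)) :=
        (sum_le_sum_of_subset_of_nonneg (tadpole_edgeFinset_subset hm)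
          fun e _ _ => edgeTerm_nonneg p g e).trans
          (sum_image_le_of_nonneg fun e _ => edgeTerm_nonneg p g e)
    _ = (b m - b (m - 2)) ^ p + ∑ k ∈ range m, (b (k + 1) - b k) ^ p := by
        rw [Fintype.sum_option, Option.elim_none, hhead]
        simp only [Option.elim_some, hpath]
        rw [Fin.sum_univ_eq_sum_range (fun k => (b (m - 1 - k + 1) - b (m - 1 - k)) ^ p),
          sum_range_reflect (fun k => (b (k + 1) - b k) ^ p)]

end Tadpole

section Transplant

variable {V : Type*} [Fintype V] {m : ℕ}

lemma exists_equiv_fin_monotone (F : V → ℝ) (hcard : Fintype.card V = m + 1) :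
    ∃ (r : V ≃ Fin (m + 1)) (b : ℕ → ℝ), Monotone b ∧ ∀ v, F v = b (r v) := by
  let e := Fintype.equivFinOfCardEq hcard
  let σ := Tuple.sort (F ∘ e.symm)
  refine ⟨e.trans σ.symm, fun k => F (e.symm (σ ⟨min k m, by omega⟩)), fun k l hkl => ?_,
    fun v => ?_⟩
  · exact Tuple.monotone_sort (F ∘ e.symm) (Fin.mk_le_mk.2 (min_le_min_right m hkl))
  · have hv : min ((σ.symm (e v) : Fin (m + 1)) : ℕ) m = σ.symm (e v) :=
      min_eq_left (Fin.is_le _)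
    simp [hv]

lemma sum_comp_sub_eq_sum_comp_equiv (r : V ≃ Fin (m + 1)) (φ : ℕ → ℝ) :
    ∑ t : Fin (m + 1), φ (m - t) = ∑ v, φ (r v) :=
  calc ∑ t : Fin (m + 1), φ (m - t) = ∑ t : Fin (m + 1), φ (Fin.revPerm t) := by
        simp only [Fin.revPerm_apply, Fin.val_rev]
        congr! 2
        omega
    _ = ∑ t : Fin (m + 1), φ t := Equiv.sum_comp Fin.revPerm (fun t => φ t)
    _ = ∑ v, φ (r v) := (Equiv.sum_comp r (fun t => φ t)).symm

theorem exists_tadpole_rayleigh_le [DecidableEq V] {G : SimpleGraph V} (hconn : G.Connected)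
    (hm : 3 ≤ m) (hcard : Fintype.card V = m + 1) {v₀ : V} (hv₀ : G.degree v₀ = 1) {p : ℝ}
    (hp : 1 ≤ p) {f : V → ℝ} (hf : f ≠ 0) (hfb : ∀ v, G.degree v = 1 → f v = 0) :
    ∃ g : Fin (m + 1) → ℝ, g ≠ 0 ∧ (∀ t, (tadpole (m + 1) 3).degree t = 1 → g t = 0) ∧
      rayleigh (tadpole (m + 1) 3) p g ≤ rayleigh G p f := by
  obtain ⟨r, b, hb, hfr⟩ := exists_equiv_fin_monotone (fun v => |f v|) hcard
  have hb0 : b 0 = 0 := by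
    refine le_antisymm ((hb (r v₀).val.zero_le).trans_eq ?_) ?_
    · rw [← hfr, hfb v₀ hv₀, abs_zero]
    · have h := hfr (r.symm 0)
      rw [Equiv.apply_symm_apply, Fin.val_zero] at h
      exact h ▸ abs_nonneg _
  have htop : 0 < b m := by
    obtain ⟨v, hv⟩ := Function.ne_iff.1 hf
    exact (abs_pos.2 hv).trans_le ((hfr v).trans_le (hb (Fin.is_le (r v))))
  have hdeg (v : V) (hv : 0 < b (r v)) : 2 ≤ G.degree v := by
    have : Nontrivial V := Fintype.one_lt_card_iff_nontrivial.1 (by omega)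
    have h₀ := hconn.preconnected.degree_pos_of_nontrivial v
    have h₁ : G.degree v ≠ 1 := fun h => hv.ne' (by rw [← hfr, hfb v h, abs_zero])
    omega
  refine ⟨fun t => b (m - t), fun h => htop.ne' (by simpa using congrFun h 0), fun t ht => ?_, ?_⟩
  · simpa [eq_last_of_tadpole_degree_eq_one hm ht] using hb0
  have hnum : ∑ e ∈ (tadpole (m + 1) 3).edgeFinset, edgeTerm p (fun t : Fin (m + 1) => b (m - t)) e
      ≤ ∑ e ∈ G.edgeFinset, edgeTerm p f e :=
    calc _ ≤ (b m - b (m - 2)) ^ p + ∑ k ∈ range m, (b (k + 1) - b k) ^ p :=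
          tadpole_energy_le (by omega) hb p
      _ ≤ ∑ e ∈ G.edgeFinset, edgeTerm p (fun v => b (r v)) e :=
          rpow_add_sum_rpow_le_energy r hconn (by omega) hb hb0.ge hdeg htop hp
      _ = ∑ e ∈ G.edgeFinset, edgeTerm p (fun v => |f v|) e := by simp only [hfr]
      _ ≤ ∑ e ∈ G.edgeFinset, edgeTerm p f e :=
          sum_le_sum fun e _ => edgeTerm_abs_le (by linarith) f e
  have hden : ∑ t : Fin (m + 1), |b (m - t)| ^ p = ∑ v, |f v| ^ p := by
    rw [sum_comp_sub_eq_sum_comp_equiv r (fun k => |b k| ^ p)]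
    simp [← hfr]
  rw [rayleigh, rayleigh, hden]
  exact div_le_div_of_nonneg_right hnum (sum_nonneg fun _ _ => Real.rpow_nonneg (abs_nonneg _) _)

end Transplant

/-- Faber–Krahn inequality for graphs with a fixed number of vertices. -/
theorem faber_krahn_vertices {V : Type*} [Fintype V] [DecidableEq V] (G : SimpleGraph V)
    (n : ℕ) (hn : 4 ≤ n) (hcard : Fintype.card V = n) (hconn : G.Connected)
    (hbd : ∃ v, G.degree v = 1) {p : ℝ} (hp : 1 < p) :
    lambda1 G p ≥ lambda1 (tadpole n 3) p := by
  obtain ⟨m, rfl⟩ : ∃ m, n = m + 1 := ⟨n - 1, by omega⟩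
  obtain ⟨v₀, hv₀⟩ := hbd
  exact lambda1_le_lambda1_of_forall_exists_rayleigh_le (exists_degree_ne_one hconn (by omega))
    fun f hf hfb => exists_tadpole_rayleigh_le hconn (by omega) hcard hv₀ hp.le hf hfb
end
end

section
/- Let p > 1 and let G be a finite simple connected graph with exactly n ≥ 4 edges whose boundary B(G) (the set of vertices of degree one) is nonempty. Then λ_{1,p}(G) ≥ λ_{1,p}(T_{n,3}), where T_{n,3} is the tadpole graph on n vertices with head of size 3. -/
open scoped Classical

noncomputable section

/-!
Replacing `f` by `|f|` only lowers the Rayleigh quotient, so let `f ≥ 0` and list its values in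
decreasing order `β₀ ≥ β₁ ≥ ⋯`, padded with zeros; put `δₖ = βₖ - βₖ₊₁`. Vertices where `f > 0`
are not leaves, hence have degree at least two, and a degree count in a graph with a leaf shows
there are fewer than `n` of them: `βₙ₋₁ = 0`. So `tₖ₊₁ ↦ βₖ` is a test function on `T_{n,3}`
with the same `ℓ^p` norm, and its energy is `(δ₀ + δ₁)^p + ∑_{k < n-1} δₖ^p`.

An edge `ab` of `G` contributes `|f a - f b|^p = (∑ δₖ)^p`, the sum running over the levels it
spans. Every positive gap `δₖ` is spanned by some edge (connectedness), and the top vertex has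
an edge spanning both `δ₀` and `δ₁` besides the edges chosen for `δ₀` and `δ₁`. Distributing the
tadpole terms over these edges with disjoint sets of levels per edge, superadditivity of
`t ↦ t^p` gives the inequality of energies.
-/

open Finset

namespace FaberKrahn

theorem sum_rpow_le_rpow_sum {ι : Type*} {p : ℝ} (hp : 1 ≤ p) (s : Finset ι) {x : ι → ℝ}
    (hx : ∀ i ∈ s, 0 ≤ x i) : ∑ i ∈ s, x i ^ p ≤ (∑ i ∈ s, x i) ^ p := by
  induction s using Finset.cons_induction with
  | empty => simp only [sum_empty]; positivity
  | cons a s ha ih =>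
    have hs : ∀ i ∈ s, 0 ≤ x i := fun i hi => hx i (mem_cons_of_mem hi)
    rw [sum_cons, sum_cons]
    calc x a ^ p + ∑ i ∈ s, x i ^ p ≤ x a ^ p + (∑ i ∈ s, x i) ^ p := by gcongr; exact ih hs
      _ ≤ (x a + ∑ i ∈ s, x i) ^ p :=
        Real.add_rpow_le_rpow_add (hx a (mem_cons_self a s)) (sum_nonneg hs) hp

theorem sum_rpow_le_of_disjoint_assignment {ι κ α : Type*} [DecidableEq κ] [DecidableEq α]
    {p : ℝ} (hp : 1 ≤ p) {δ : α → ℝ} (hδ : ∀ a, 0 ≤ δ a) {s : Finset ι} {t : Finset κ}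
    {J : ι → Finset α} {S : κ → Finset α} {A : ι → κ}
    (hA : ∀ i ∈ s, A i ∈ t ∧ J i ⊆ S (A i))
    (hdisj : ∀ i ∈ s, ∀ j ∈ s, i ≠ j → A i = A j → Disjoint (J i) (J j)) :
    ∑ i ∈ s, (∑ a ∈ J i, δ a) ^ p ≤ ∑ e ∈ t, (∑ a ∈ S e, δ a) ^ p := by
  rw [← sum_fiberwise_of_maps_to fun i hi => (hA i hi).1]
  refine sum_le_sum fun e _ => ?_
  have hfiber : ∑ i ∈ s with A i = e, ∑ a ∈ J i, δ a ≤ ∑ a ∈ S e, δ a := by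
    rw [← sum_biUnion]
    · refine sum_le_sum_of_subset_of_nonneg ?_ fun a _ _ => hδ a
      simp only [biUnion_subset, mem_filter]
      rintro i ⟨hi, rfl⟩
      exact (hA i hi).2
    · intro i hi j hj hij
      simp only [coe_filter, Set.mem_ofPred_eq] at hi hj
      exact hdisj i hi.1 j hj.1 hij (hi.2.trans hj.2.symm)
  calc ∑ i ∈ s with A i = e, (∑ a ∈ J i, δ a) ^ p
      ≤ (∑ i ∈ s with A i = e, ∑ a ∈ J i, δ a) ^ p :=
        sum_rpow_le_rpow_sum hp _ fun i _ => sum_nonneg fun a _ => hδ a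
    _ ≤ (∑ a ∈ S e, δ a) ^ p :=
        Real.rpow_le_rpow (sum_nonneg fun i _ => sum_nonneg fun a _ => hδ a) hfiber (by linarith)

theorem edgeTerm_mk {V : Type*} (p : ℝ) (f : V → ℝ) (a b : V) :
    edgeTerm p f s(a, b) = |f a - f b| ^ p := rfl

theorem edgeTerm_nonneg {V : Type*} (p : ℝ) (f : V → ℝ) (e : Sym2 V) : 0 ≤ edgeTerm p f e := by
  induction e using Sym2.ind with
  | _ a b => exact Real.rpow_nonneg (abs_nonneg _) p

section LevelSpan

variable {V : Type*} (pos : V → ℕ)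

def levelSpan : Sym2 V → Finset ℕ :=
  Sym2.lift ⟨fun a b => Ico (min (pos a) (pos b)) (max (pos a) (pos b)),
    fun a b => by simp only [min_comm, max_comm]⟩

variable {pos}

theorem mem_levelSpan_mk {a b : V} {k : ℕ} :
    k ∈ levelSpan pos s(a, b) ↔ min (pos a) (pos b) ≤ k ∧ k < max (pos a) (pos b) :=
  mem_Ico

theorem mem_levelSpan_of_le_of_lt {a b : V} {k : ℕ} (ha : pos a ≤ k) (hb : k < pos b) :
    k ∈ levelSpan pos s(a, b) :=
  mem_levelSpan_mk.mpr ⟨min_le_of_left_le ha, lt_max_of_lt_right hb⟩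

theorem exists_mem_levelSpan [Fintype V] {G : SimpleGraph V} [DecidableRel G.Adj]
    (hG : G.Preconnected) {u x : V} {k : ℕ} (hu : pos u ≤ k) (hx : k < pos x) :
    ∃ e ∈ G.edgeFinset, k ∈ levelSpan pos e := by
  obtain ⟨w⟩ := hG u x
  obtain ⟨d, -, hd, hd'⟩ := w.exists_boundary_dart {v | pos v ≤ k} hu (not_le.mpr hx)
  exact ⟨d.edge, SimpleGraph.mem_edgeFinset.mpr d.edge_mem,
    mem_levelSpan_of_le_of_lt hd (not_le.mp hd')⟩

end LevelSpan

section Rearrangement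

variable {V : Type*} [Fintype V] (f : V → ℝ)

def decEnum : Fin (Fintype.card V) ≃ V :=
  (Fin.revPerm.trans (Tuple.sort (f ∘ (Fintype.equivFin V).symm))).trans
    (Fintype.equivFin V).symm

def decRank (v : V) : ℕ := (decEnum f).symm v

/-- The decreasing rearrangement `β` of `f`; `decGap f k` is the gap `δₖ`. -/
def decRearr (k : ℕ) : ℝ := if h : k < Fintype.card V then f (decEnum f ⟨k, h⟩) else 0

def decGap (k : ℕ) : ℝ := decRearr f k - decRearr f (k + 1)

variable {f}

theorem antitone_comp_decEnum : Antitone (f ∘ decEnum f) := fun _ _ hij =>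
  Tuple.monotone_sort (f ∘ (Fintype.equivFin V).symm) (Fin.rev_le_rev.mpr hij)

theorem decRank_injective : Function.Injective (decRank f) :=
  fun _ _ h => (decEnum f).symm.injective (Fin.ext h)

theorem decRank_decEnum (j : Fin (Fintype.card V)) : decRank f (decEnum f j) = j := by
  simp [decRank]

theorem decRearr_decRank (v : V) : decRearr f (decRank f v) = f v := by
  simp [decRearr, decRank]

theorem decRearr_val (j : Fin (Fintype.card V)) : decRearr f j = f (decEnum f j) :=
  dif_pos j.isLt

theorem decRearr_nonneg (hf : 0 ≤ f) (k : ℕ) : 0 ≤ decRearr f k := by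
  unfold decRearr; split_ifs; exacts [hf _, le_rfl]

theorem decRearr_of_card_le {k : ℕ} (hk : Fintype.card V ≤ k) : decRearr f k = 0 :=
  dif_neg (not_lt.mpr hk)

theorem antitone_decRearr (hf : 0 ≤ f) : Antitone (decRearr f) := by
  intro i j hij
  by_cases hj : j < Fintype.card V
  · rw [decRearr, decRearr, dif_pos hj, dif_pos (hij.trans_lt hj)]
    exact antitone_comp_decEnum (f := f) (Fin.mk_le_mk.mpr hij)
  · rw [decRearr_of_card_le (not_lt.mp hj)]
    exact decRearr_nonneg hf i

theorem decGap_nonneg (hf : 0 ≤ f) (k : ℕ) : 0 ≤ decGap f k :=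
  sub_nonneg.mpr (antitone_decRearr hf k.le_succ)

theorem exists_decRank_eq {k : ℕ} (hk : decRearr f k ≠ 0) : ∃ v, decRank f v = k := by
  by_cases h : k < Fintype.card V
  · exact ⟨decEnum f ⟨k, h⟩, decRank_decEnum _⟩
  · exact absurd (decRearr_of_card_le (not_lt.mp h)) hk

theorem decRearr_zero_pos (hf : 0 ≤ f) (hf0 : f ≠ 0) : 0 < decRearr f 0 := by
  obtain ⟨v, hv⟩ := Function.ne_iff.mp hf0
  calc 0 < f v := lt_of_le_of_ne (hf v) (Ne.symm hv)
    _ = decRearr f (decRank f v) := (decRearr_decRank v).symm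
    _ ≤ decRearr f 0 := antitone_decRearr hf (Nat.zero_le _)

theorem lt_decRank_of_decRearr_lt (hf : 0 ≤ f) {v : V} {k : ℕ} (h : f v < decRearr f k) :
    k < decRank f v := by
  by_contra! hle
  have := antitone_decRearr hf hle
  rw [decRearr_decRank] at this
  exact this.not_gt h

theorem decRearr_eq_zero (hf : 0 ≤ f) {k : ℕ} (hk : #{v | 0 < f v} ≤ k) : decRearr f k = 0 := by
  by_contra hne
  have hpos : ∀ j ≤ k, 0 < decRearr f j := fun j hj =>
    (lt_of_le_of_ne (decRearr_nonneg hf k) (Ne.symm hne)).trans_le (antitone_decRearr hf hj)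
  have hsurj : Set.SurjOn (decRank f) ↑(univ.filter fun v => 0 < f v) ↑(range (k + 1)) := by
    intro j hj
    have hj : j ≤ k := Nat.lt_succ_iff.mp (mem_range.mp hj)
    obtain ⟨v, hv⟩ := exists_decRank_eq (hpos j hj).ne'
    refine ⟨v, ?_, hv⟩
    simpa [← decRearr_decRank (f := f) v, hv] using hpos j hj
  have := card_le_card_of_surjOn _ hsurj
  simp only [card_range] at this
  omega

theorem sum_decRearr_rpow {p : ℝ} (hp : p ≠ 0) {N : ℕ} (hN : ∀ k ≥ N, decRearr f k = 0) :
    ∑ k ∈ range N, |decRearr f k| ^ p = ∑ v, |f v| ^ p := by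
  have hzero : ∀ k ≥ min N (Fintype.card V), |decRearr f k| ^ p = 0 := fun k hk => by
    rcases min_le_iff.mp hk with hk | hk
    all_goals simp [hN, decRearr_of_card_le, hk, Real.zero_rpow hp]
  rw [eventually_constant_sum hzero (min_le_left _ _),
    ← eventually_constant_sum hzero (min_le_right _ _), ← Fin.sum_univ_eq_sum_range,
    ← (decEnum f).sum_comp]
  simp only [decRearr_val]

theorem sum_Ico_decGap {i j : ℕ} (hij : i ≤ j) :
    ∑ k ∈ Ico i j, decGap f k = decRearr f i - decRearr f j := by
  have := sum_Ico_sub (fun k => -decRearr f k) hij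
  simp only [decGap, sub_neg_eq_add, neg_add_eq_sub] at this ⊢
  rw [this]

theorem decRearr_pos_of_decGap_pos (hf : 0 ≤ f) {k : ℕ} (hk : 0 < decGap f k) :
    0 < decRearr f k := by
  unfold decGap at hk
  linarith [decRearr_nonneg hf (k + 1)]

theorem edgeTerm_eq_rpow_sum_decGap (hf : 0 ≤ f) (p : ℝ) (e : Sym2 V) :
    edgeTerm p f e = (∑ k ∈ levelSpan (decRank f) e, decGap f k) ^ p := by
  induction e using Sym2.ind with
  | _ a b =>
    rw [edgeTerm_mk, levelSpan, Sym2.lift_mk, sum_Ico_decGap min_le_max,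
      ← decRearr_decRank (f := f) a, ← decRearr_decRank (f := f) b]
    rcases le_total (decRank f a) (decRank f b) with h | h
    · rw [min_eq_left h, max_eq_right h, abs_of_nonneg (sub_nonneg.mpr (antitone_decRearr hf h))]
    · rw [min_eq_right h, max_eq_left h, abs_sub_comm,
        abs_of_nonneg (sub_nonneg.mpr (antitone_decRearr hf h))]

end Rearrangement

section Graph

variable {V : Type*} [Fintype V] {G : SimpleGraph V} [DecidableRel G.Adj]

theorem card_two_le_degree_lt_card_edgeFinset (hleaf : ∃ v, G.degree v = 1) :
    #{v | 2 ≤ G.degree v} < #G.edgeFinset := by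
  obtain ⟨ℓ, hℓ⟩ := hleaf
  set S : Finset V := {v | 2 ≤ G.degree v}
  have hℓS : ℓ ∉ S := by simp [S, hℓ]
  have : 2 * #S + 1 ≤ 2 * #G.edgeFinset :=
    calc 2 * #S + 1 = ∑ _ ∈ S, 2 + G.degree ℓ := by rw [sum_const, smul_eq_mul, hℓ, mul_comm]
      _ ≤ ∑ v ∈ S, G.degree v + G.degree ℓ := by
        gcongr with v hv; exact (mem_filter.mp hv).2
      _ = ∑ v ∈ insert ℓ S, G.degree v := by rw [sum_insert hℓS, add_comm]
      _ ≤ ∑ v, G.degree v := sum_le_sum_of_subset (subset_univ _)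
      _ = 2 * #G.edgeFinset := G.sum_degrees_eq_twice_card_edges
  omega

theorem exists_degree_ne_one (hG : G.Connected) (h : 2 ≤ #G.edgeFinset) :
    ∃ v, G.degree v ≠ 1 := by
  by_contra! hall
  have hsum : Fintype.card V = 2 * #G.edgeFinset := by
    simpa [hall] using G.sum_degrees_eq_twice_card_edges
  have htree := hG.card_vert_le_card_edgeSet_add_one
  rw [Nat.card_eq_fintype_card, Nat.card_eq_fintype_card, ← SimpleGraph.edgeFinset_card] at htree
  omega

theorem two_le_degree_of_ne_one [Nontrivial V] (hG : G.Preconnected) {v : V}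
    (hv : G.degree v ≠ 1) : 2 ≤ G.degree v := by
  have := hG.degree_pos_of_nontrivial v
  omega

theorem exists_adj_adj_two_le {pos : V → ℕ} (hpos : Function.Injective pos) {v : V}
    (hv : 2 ≤ G.degree v) (hv1 : pos v ≤ 1) :
    ∃ y y', G.Adj v y ∧ G.Adj v y' ∧ y ≠ y' ∧ 2 ≤ pos y := by
  rw [← SimpleGraph.card_neighborFinset_eq_degree] at hv
  obtain ⟨a, ha, b, hb, hab⟩ := one_lt_card.mp hv
  rw [SimpleGraph.mem_neighborFinset] at ha hb
  have hpa : pos a ≠ pos v := hpos.ne ha.ne'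
  have hpb : pos b ≠ pos v := hpos.ne hb.ne'
  have hpab : pos a ≠ pos b := hpos.ne hab
  by_cases h : 2 ≤ pos a
  · exact ⟨a, b, ha, hb, hab, h⟩
  · exact ⟨b, a, hb, ha, hab.symm, by omega⟩

end Graph

section Energy

variable {V : Type*} [Fintype V] {G : SimpleGraph V} [DecidableRel G.Adj] {f : V → ℝ}

theorem exists_mem_levelSpan_of_decGap_pos (hG : G.Preconnected) (hf : 0 ≤ f)
    (hz : ∃ v, f v = 0) {k : ℕ} (hk : 0 < decGap f k) :
    ∃ e ∈ G.edgeFinset, k ∈ levelSpan (decRank f) e := by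
  have hβ := decRearr_pos_of_decGap_pos hf hk
  obtain ⟨u, hu⟩ := exists_decRank_eq hβ.ne'
  obtain ⟨x, hx⟩ := hz
  exact exists_mem_levelSpan hG hu.le (lt_decRank_of_decRearr_lt hf (hx ▸ hβ))

/-- `e` will carry the term `(δ₀ + δ₁)^p` of the chord `t₁t₃` of the tadpole, and the edges `e'`
the terms `δ₀^p` and `δ₁^p`. -/
theorem exists_edge_spanning_top_levels (hf : 0 ≤ f) (hf0 : f ≠ 0)
    (hdeg : ∀ v, 0 < f v → 2 ≤ G.degree v) :
    ∃ e ∈ G.edgeFinset, {0, 1} ⊆ levelSpan (decRank f) e ∧ ∀ k ≤ 1, 0 < decGap f k →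
      ∃ e' ∈ G.edgeFinset, k ∈ levelSpan (decRank f) e' ∧ e' ≠ e := by
  have hvertex : ∀ k, 0 < decRearr f k → ∃ v, decRank f v = k ∧ 2 ≤ G.degree v := fun k hk => by
    obtain ⟨v, hv⟩ := exists_decRank_eq hk.ne'
    exact ⟨v, hv, hdeg v (by rwa [← decRearr_decRank (f := f) v, hv])⟩
  obtain ⟨x₀, hx₀, hdeg₀⟩ := hvertex 0 (decRearr_zero_pos hf hf0)
  have hinj := decRank_injective (f := f)
  obtain ⟨y, y', hy, hy', hyy', hy2⟩ := exists_adj_adj_two_le hinj hdeg₀ (by omega)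
  have hy'1 : 1 ≤ decRank f y' := by
    have := hinj.ne hy'.ne'; omega
  refine ⟨s(x₀, y), SimpleGraph.mem_edgeFinset.mpr hy, ?_, fun k hk hgap => ?_⟩
  · intro k hk
    rw [mem_insert, mem_singleton] at hk
    exact mem_levelSpan_of_le_of_lt (by omega) (by omega)
  interval_cases k
  · refine ⟨s(x₀, y'), SimpleGraph.mem_edgeFinset.mpr hy',
      mem_levelSpan_of_le_of_lt hx₀.le (by omega), fun h => hyy' ?_⟩
    exact (Sym2.congr_right.mp h).symm
  · obtain ⟨x₁, hx₁, hdeg₁⟩ := hvertex 1 (decRearr_pos_of_decGap_pos hf hgap)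
    obtain ⟨z, -, hz, -, -, hz2⟩ := exists_adj_adj_two_le hinj hdeg₁ (by omega)
    refine ⟨s(x₁, z), SimpleGraph.mem_edgeFinset.mpr hz,
      mem_levelSpan_of_le_of_lt hx₁.le (by omega), fun h => ?_⟩
    have h0 : 0 ∈ levelSpan (decRank f) s(x₁, z) :=
      h ▸ mem_levelSpan_of_le_of_lt hx₀.le (by omega)
    rw [mem_levelSpan_mk] at h0
    omega

/-- The `p`-energy of `f` on `G` dominates that of the decreasing rearrangement on a tadpole
with head of size `3` and `K + 1` vertices. -/
theorem rpow_top_gaps_add_sum_le_energy (hG : G.Preconnected) (hf : 0 ≤ f) (hf0 : f ≠ 0)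
    (hz : ∃ v, f v = 0) (hdeg : ∀ v, 0 < f v → 2 ≤ G.degree v) {p : ℝ} (hp : 1 ≤ p) (K : ℕ) :
    (decGap f 0 + decGap f 1) ^ p + ∑ k ∈ range K, decGap f k ^ p ≤
      ∑ e ∈ G.edgeFinset, edgeTerm p f e := by
  obtain ⟨e₀, he₀, htop, hsecond⟩ := exists_edge_spanning_top_levels hf hf0 hdeg
  have hcross : ∀ k, ∃ e, 0 < decGap f k →
      e ∈ G.edgeFinset ∧ k ∈ levelSpan (decRank f) e ∧ (k ≤ 1 → e ≠ e₀) := fun k => by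
    by_cases hk : 0 < decGap f k
    · by_cases hk1 : k ≤ 1
      · obtain ⟨e, he, hke, hne⟩ := hsecond k hk1 hk
        exact ⟨e, fun _ => ⟨he, hke, fun _ => hne⟩⟩
      · obtain ⟨e, he, hke⟩ := exists_mem_levelSpan_of_decGap_pos hG hf hz hk
        exact ⟨e, fun _ => ⟨he, hke, fun h => absurd h hk1⟩⟩
    · exact ⟨e₀, fun h => absurd h hk⟩
  choose A hA using hcross
  have key := sum_rpow_le_of_disjoint_assignment hp (decGap_nonneg hf)
    (s := insertNone {k ∈ range K | 0 < decGap f k}) (t := G.edgeFinset)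
    (J := fun i => i.elim {0, 1} singleton) (S := levelSpan (decRank f))
    (A := fun i => i.elim e₀ A) ?_ ?_
  · have hp0 : p ≠ 0 := by positivity
    simp only [sum_insertNone, Option.elim, sum_pair zero_ne_one, sum_singleton] at key
    rw [sum_filter_of_ne fun k _ hk => ?_] at key
    · simpa only [edgeTerm_eq_rpow_sum_decGap hf] using key
    · exact lt_of_le_of_ne (decGap_nonneg hf k) fun h => hk (by rw [← h, Real.zero_rpow hp0])
  · rintro (_ | k) hk
    · exact ⟨he₀, htop⟩
    · obtain ⟨he, hke, -⟩ := hA k (mem_filter.mp (mem_insertNone.mp hk k rfl)).2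
      exact ⟨he, singleton_subset_iff.mpr hke⟩
  · have hfar : ∀ k, some k ∈ insertNone {k ∈ range K | 0 < decGap f k} → A k = e₀ →
        k ∉ ({0, 1} : Finset ℕ) := fun k hk hAk hk01 => by
      refine (hA k (mem_filter.mp (mem_insertNone.mp hk k rfl)).2).2.2 ?_ hAk
      simp only [mem_insert, mem_singleton] at hk01
      omega
    rintro (_ | i) hi (_ | j) hj hij hAij <;> simp only [Option.elim] at hAij ⊢
    · exact absurd rfl hij
    · exact disjoint_singleton_right.mpr (hfar j hj hAij.symm)
    · exact disjoint_singleton_left.mpr (hfar i hi hAij)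
    · exact disjoint_singleton.mpr fun h => hij (congrArg some h)

end Energy

section Tadpole

variable {n : ℕ}

theorem tadpole_adj {i : ℕ} {a b : Fin n} : (tadpole n i).Adj a b ↔ a ≠ b ∧
    ((a.val + 1 = b.val ∨ a.val = 0 ∧ b.val = i - 1) ∨
      (b.val + 1 = a.val ∨ b.val = 0 ∧ a.val = i - 1)) :=
  SimpleGraph.fromRel_adj _ _ _

theorem two_le_degree_tadpole_three (hn : 3 ≤ n) {v : Fin n} (hv : v.val ≠ n - 1) :
    2 ≤ (tadpole n 3).degree v := by
  rw [← SimpleGraph.card_neighborFinset_eq_degree]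
  refine one_lt_card.mpr ?_
  simp only [SimpleGraph.mem_neighborFinset, tadpole_adj, ne_eq, Fin.ext_iff]
  by_cases h0 : v.val = 0
  · exact ⟨⟨1, by omega⟩, by dsimp only; omega, ⟨2, by omega⟩, by dsimp only; omega,
      by dsimp only; omega⟩
  · exact ⟨⟨v - 1, by omega⟩, by dsimp only; omega, ⟨v + 1, by omega⟩, by dsimp only; omega,
      by dsimp only; omega⟩

theorem energy_tadpole_three_le (hn : 3 ≤ n) (p : ℝ) (β : ℕ → ℝ) :
    ∑ e ∈ (tadpole n 3).edgeFinset, edgeTerm p (fun v : Fin n => β v) e ≤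
      |β 0 - β 2| ^ p + ∑ k ∈ range (n - 1), |β k - β (k + 1)| ^ p := by
  let edge : Option (Fin (n - 1)) → Sym2 (Fin n) := fun i =>
    i.elim s(⟨0, by omega⟩, ⟨2, by omega⟩) fun k => s(⟨k, by omega⟩, ⟨k + 1, by omega⟩)
  have hsub : (tadpole n 3).edgeFinset ⊆ (insertNone univ).image edge := by
    intro e he
    induction e using Sym2.ind with
    | _ a b =>
      rw [SimpleGraph.mem_edgeFinset, SimpleGraph.mem_edgeSet, tadpole_adj] at he
      have hedge : ∀ i, (edge i = s(a, b)) → s(a, b) ∈ (insertNone univ).image edge :=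
        fun i hi => mem_image.mpr ⟨i, by simp, hi⟩
      obtain ⟨-, (h | h) | (h | h)⟩ := he <;>
        [refine hedge (some ⟨a, by omega⟩) ?_; refine hedge none ?_;
          refine hedge (some ⟨b, by omega⟩) ?_; refine hedge none ?_] <;>
        simp only [edge, Option.elim, Sym2.eq_iff, Fin.ext_iff, true_and] <;> omega
  calc ∑ e ∈ (tadpole n 3).edgeFinset, edgeTerm p (fun v : Fin n => β v) e
      ≤ ∑ e ∈ (insertNone univ).image edge, edgeTerm p (fun v : Fin n => β v) e :=
        sum_le_sum_of_subset_of_nonneg hsub fun e _ _ => edgeTerm_nonneg p _ e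
    _ ≤ ∑ i ∈ insertNone univ, edgeTerm p (fun v : Fin n => β v) (edge i) :=
        sum_image_le_of_nonneg fun e _ => edgeTerm_nonneg p _ e
    _ = |β 0 - β 2| ^ p + ∑ k ∈ range (n - 1), |β k - β (k + 1)| ^ p := by
        rw [sum_insertNone, ← Fin.sum_univ_eq_sum_range]
        rfl

end Tadpole

section Rayleigh

variable {V : Type*} [Fintype V] [DecidableEq V] {G : SimpleGraph V} {p : ℝ}

theorem rayleigh_nonneg (f : V → ℝ) : 0 ≤ rayleigh G p f :=
  div_nonneg (sum_nonneg fun e _ => edgeTerm_nonneg p f e)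
    (sum_nonneg fun _ _ => Real.rpow_nonneg (abs_nonneg _) p)

theorem rayleigh_abs_le (hp : 0 ≤ p) (f : V → ℝ) : rayleigh G p (|f ·|) ≤ rayleigh G p f := by
  simp only [rayleigh, abs_abs]
  refine div_le_div_of_nonneg_right (sum_le_sum fun e _ => ?_)
    (sum_nonneg fun _ _ => Real.rpow_nonneg (abs_nonneg _) p)
  induction e using Sym2.ind with
  | _ a b => exact Real.rpow_le_rpow (abs_nonneg _) (abs_abs_sub_abs_le_abs_sub _ _) hp

theorem lambda1_le_rayleigh {f : V → ℝ} (hf : f ≠ 0) (hB : ∀ v, G.degree v = 1 → f v = 0) :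
    lambda1 G p ≤ rayleigh G p f :=
  csInf_le ⟨0, by rintro _ ⟨g, -, -, rfl⟩; exact rayleigh_nonneg g⟩ ⟨f, hf, hB, rfl⟩

theorem le_lambda1 {r : ℝ} (hG : ∃ v, G.degree v ≠ 1)
    (h : ∀ f : V → ℝ, f ≠ 0 → (∀ v, G.degree v = 1 → f v = 0) → r ≤ rayleigh G p f) :
    r ≤ lambda1 G p := by
  obtain ⟨v₀, hv₀⟩ := hG
  refine le_csInf ⟨_, Pi.single v₀ 1, ?_, ?_, rfl⟩ ?_
  · exact fun h => by simpa using congrFun h v₀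
  · exact fun v hv => Pi.single_eq_of_ne (by rintro rfl; exact hv₀ hv) 1
  · rintro _ ⟨f, hf, hB, rfl⟩
    exact h f hf hB

end Rayleigh

section Transplant

variable {V : Type*} [Fintype V] [DecidableEq V] {G : SimpleGraph V} {f : V → ℝ} {n : ℕ} {p : ℝ}

theorem rayleigh_tadpole_decRearr_le (hG : G.Preconnected) (hf : 0 ≤ f) (hf0 : f ≠ 0)
    (hz : ∃ v, f v = 0) (hdeg : ∀ v, 0 < f v → 2 ≤ G.degree v) (hn : 3 ≤ n)
    (hcount : #{v | 0 < f v} ≤ n) (hp : 1 ≤ p) :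
    rayleigh (tadpole n 3) p (fun v : Fin n => decRearr f v) ≤ rayleigh G p f := by
  have hden : ∑ v : Fin n, |decRearr f v| ^ p = ∑ v, |f v| ^ p := by
    rw [Fin.sum_univ_eq_sum_range (fun k => |decRearr f k| ^ p)]
    exact sum_decRearr_rpow (by positivity) fun k hk => decRearr_eq_zero hf (hcount.trans hk)
  have hgap : ∀ k, |decRearr f k - decRearr f (k + 1)| = decGap f k := fun k =>
    abs_of_nonneg (decGap_nonneg hf k)
  have htop : |decRearr f 0 - decRearr f 2| = decGap f 0 + decGap f 1 := by
    rw [show decRearr f 0 - decRearr f 2 = decGap f 0 + decGap f 1 by unfold decGap; ring]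
    exact abs_of_nonneg (add_nonneg (decGap_nonneg hf 0) (decGap_nonneg hf 1))
  unfold rayleigh
  rw [hden]
  refine div_le_div_of_nonneg_right ?_ (sum_nonneg fun _ _ => Real.rpow_nonneg (abs_nonneg _) p)
  calc _ ≤ |decRearr f 0 - decRearr f 2| ^ p +
          ∑ k ∈ range (n - 1), |decRearr f k - decRearr f (k + 1)| ^ p :=
        energy_tadpole_three_le hn p (decRearr f)
    _ = (decGap f 0 + decGap f 1) ^ p + ∑ k ∈ range (n - 1), decGap f k ^ p := by
        simp only [hgap, htop]
    _ ≤ _ := rpow_top_gaps_add_sum_le_energy hG hf hf0 hz hdeg hp (n - 1)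

theorem exists_tadpole_rayleigh_le (hG : G.Connected) (hleaf : ∃ v, G.degree v = 1)
    (hcard : #G.edgeFinset = n) (hn : 3 ≤ n) (hp : 1 ≤ p) (hf : 0 ≤ f) (hf0 : f ≠ 0)
    (hB : ∀ v, G.degree v = 1 → f v = 0) :
    ∃ g : Fin n → ℝ, g ≠ 0 ∧ (∀ v, (tadpole n 3).degree v = 1 → g v = 0) ∧
      rayleigh (tadpole n 3) p g ≤ rayleigh G p f := by
  obtain ⟨ℓ, hℓ⟩ := hleaf
  obtain ⟨w, hw⟩ := (G.degree_pos_iff_exists_adj ℓ).mp (by omega)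
  have : Nontrivial V := nontrivial_of_ne ℓ w hw.ne
  have hdeg : ∀ v, 0 < f v → 2 ≤ G.degree v := fun v hv =>
    two_le_degree_of_ne_one hG.preconnected fun h => hv.ne' (hB v h)
  have hcount : #{v | 0 < f v} < n :=
    (card_le_card (monotone_filter_right _ fun v _ => hdeg v)).trans_lt
      (hcard ▸ card_two_le_degree_lt_card_edgeFinset ⟨ℓ, hℓ⟩)
  refine ⟨fun v => decRearr f v, fun h => ?_, fun v hv => decRearr_eq_zero hf ?_,
    rayleigh_tadpole_decRearr_le hG.preconnected hf hf0 ⟨ℓ, hB ℓ hℓ⟩ hdeg hn hcount.le hp⟩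
  · exact (decRearr_zero_pos hf hf0).ne' (congrFun h ⟨0, by omega⟩)
  · have := mt (two_le_degree_tadpole_three hn (v := v)) (by omega)
    omega

end Transplant

end FaberKrahn

/-- Faber–Krahn inequality for graphs with a fixed number of edges. -/
theorem faber_krahn_edges {V : Type*} [Fintype V] [DecidableEq V] (G : SimpleGraph V)
    (n : ℕ) (hn : 4 ≤ n) (hcard : G.edgeFinset.card = n) (hconn : G.Connected)
    (hbd : ∃ v, G.degree v = 1) {p : ℝ} (hp : 1 < p) :
    lambda1 G p ≥ lambda1 (tadpole n 3) p := by
  refine FaberKrahn.le_lambda1 (FaberKrahn.exists_degree_ne_one hconn (by omega))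
    fun f hf0 hB => ?_
  have habs0 : (|f ·|) ≠ 0 := fun h => hf0 (funext fun v => abs_eq_zero.mp (congrFun h v))
  obtain ⟨g, hg0, hgB, hg⟩ := FaberKrahn.exists_tadpole_rayleigh_le hconn hbd hcard (by omega)
    hp.le (fun v => abs_nonneg (f v)) habs0 (fun v hv => by simp [hB v hv])
  calc lambda1 (tadpole n 3) p
      ≤ rayleigh (tadpole n 3) p g := FaberKrahn.lambda1_le_rayleigh hg0 hgB
    _ ≤ rayleigh G p (|f ·|) := hg
    _ ≤ rayleigh G p f := FaberKrahn.rayleigh_abs_le (by linarith) f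
end
end

section
/- Let G be a finite simple connected graph with exactly n ≥ 4 edges whose boundary B(G) (the set of vertices of degree one) is nonempty. Then λ_{1,1}(G) ≥ 1/(n-1). -/
open scoped Classical

noncomputable section

/-!
If `f` vanishes on the boundary, then `|f v| ≤ ∑_{xy ∈ E} |f x - f y|` at every vertex `v`:
join `v` to a leaf by a path and use the triangle inequality along it. Summing over the
interior gives `∑ |f| ≤ |Ω(G)| · ∑_{xy ∈ E} |f x - f y|`, so `λ_{1,1}(G) ≥ 1 / |Ω(G)|`. Finally, the
handshake lemma `2n = ∑ deg ≥ |B(G)| + 2 |Ω(G)|` with `B(G) ≠ ∅` gives `|Ω(G)| ≤ n - 1`.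
-/

open Finset

namespace SimpleGraph

variable {V : Type*} (G : SimpleGraph V)

def boundaryFinset [Fintype V] : Finset V := {v | G.degree v = 1}

def interiorFinset [Fintype V] : Finset V := {v | G.degree v ≠ 1}

lemma edgeTerm_one_mk (f : V → ℝ) (x y : V) : edgeTerm 1 f s(x, y) = |f x - f y| := by
  simp [edgeTerm]

lemma edgeTerm_one_nonneg (f : V → ℝ) (e : Sym2 V) : 0 ≤ edgeTerm 1 f e := by
  induction e using Sym2.ind with
  | _ x y => rw [edgeTerm_one_mk]; positivity

variable {G}

lemma Walk.abs_sub_le_sum_edgeTerm (f : V → ℝ) {v w : V} (p : G.Walk v w) :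
    |f v - f w| ≤ (p.edges.map (edgeTerm 1 f)).sum := by
  induction p with
  | nil => simp
  | @cons u x w _ q ih =>
    rw [Walk.edges_cons, List.map_cons, List.sum_cons, edgeTerm_one_mk]
    linarith [abs_sub_le (f u) (f x) (f w)]

lemma Reachable.abs_sub_le_sum_edgeTerm [Fintype V] (f : V → ℝ) {v w : V}
    (h : G.Reachable v w) : |f v - f w| ≤ ∑ e ∈ G.edgeFinset, edgeTerm 1 f e := by
  obtain ⟨q⟩ := h
  obtain ⟨p, hp⟩ := q.toPath
  have hp_edges : p.edges.toFinset ⊆ G.edgeFinset := fun e he =>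
    mem_edgeFinset.mpr (p.edges_subset_edgeSet (List.mem_toFinset.mp he))
  calc |f v - f w| ≤ (p.edges.map (edgeTerm 1 f)).sum := p.abs_sub_le_sum_edgeTerm f
    _ = ∑ e ∈ p.edges.toFinset, edgeTerm 1 f e := (List.sum_toFinset _ hp.edges_nodup).symm
    _ ≤ ∑ e ∈ G.edgeFinset, edgeTerm 1 f e :=
      sum_le_sum_of_subset_of_nonneg hp_edges fun e _ _ => edgeTerm_one_nonneg f e

variable [Fintype V]

lemma Connected.sum_abs_le_card_interiorFinset_mul (hconn : G.Connected)
    (hB : G.boundaryFinset.Nonempty) {f : V → ℝ} (hf : ∀ v, G.degree v = 1 → f v = 0) :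
    ∑ v, |f v| ≤ #G.interiorFinset * ∑ e ∈ G.edgeFinset, edgeTerm 1 f e := by
  obtain ⟨b, hb⟩ := hB
  have hfb : f b = 0 := hf b (mem_filter.mp hb).2
  have h_le : ∀ v, |f v| ≤ ∑ e ∈ G.edgeFinset, edgeTerm 1 f e := fun v => by
    simpa [hfb] using (hconn.preconnected v b).abs_sub_le_sum_edgeTerm f
  have h_supp : ∑ v ∈ G.interiorFinset, |f v| = ∑ v, |f v| :=
    sum_subset (subset_univ _) fun v _ hv => by
      simp [hf v (by simpa [interiorFinset] using hv)]
  rw [← h_supp, ← nsmul_eq_mul, ← sum_const]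
  exact sum_le_sum fun v _ => h_le v

lemma Connected.one_div_card_interiorFinset_le_lambda1 (hconn : G.Connected)
    (hB : G.boundaryFinset.Nonempty) (hΩ : G.interiorFinset.Nonempty) :
    1 / (#G.interiorFinset : ℝ) ≤ lambda1 G 1 := by
  have hΩ_pos : (0 : ℝ) < #G.interiorFinset := by exact_mod_cast hΩ.card_pos
  apply le_csInf
  · obtain ⟨v₀, hv₀⟩ := hΩ
    have hv₀ : G.degree v₀ ≠ 1 := (mem_filter.mp hv₀).2
    refine ⟨_, Pi.single v₀ 1, by simp, fun v hv => ?_, rfl⟩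
    exact Pi.single_eq_of_ne (by rintro rfl; exact hv₀ hv) _
  · rintro r ⟨f, hf₀, hf, rfl⟩
    have h_mass : 0 < ∑ v, |f v| := by
      obtain ⟨v, hv⟩ := Function.ne_iff.mp hf₀
      exact sum_pos' (fun v _ => abs_nonneg _) ⟨v, mem_univ v, abs_pos.mpr hv⟩
    simp only [rayleigh, Real.rpow_one]
    rw [div_le_div_iff₀ hΩ_pos h_mass, one_mul, mul_comm]
    exact hconn.sum_abs_le_card_interiorFinset_mul hB hf

lemma Connected.two_mul_card_interiorFinset_add_card_boundaryFinset_le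
    (hconn : G.Connected) (hB : G.boundaryFinset.Nonempty) :
    2 * #G.interiorFinset + #G.boundaryFinset ≤ 2 * #G.edgeFinset := by
  obtain ⟨b, hb⟩ := hB
  obtain ⟨c, hbc⟩ := G.degree_pos_iff_exists_adj b |>.mp (by simp_all [boundaryFinset])
  have : Nontrivial V := ⟨⟨b, c, hbc.ne⟩⟩
  have h_pos : ∀ v, 0 < G.degree v := fun v => hconn.preconnected.degree_pos_of_nontrivial v
  rw [← sum_degrees_eq_twice_card_edges, ← sum_filter_not_add_sum_filter _ (G.degree · = 1)]
  gcongr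
  · rw [mul_comm, ← smul_eq_mul, ← sum_const]
    exact sum_le_sum fun v hv => by have := h_pos v; grind [interiorFinset]
  · rw [card_eq_sum_ones]
    exact (sum_congr rfl fun v hv => (mem_filter.mp hv).2.symm).le

lemma Connected.interiorFinset_nonempty (hconn : G.Connected) (hE : 2 ≤ #G.edgeFinset) :
    G.interiorFinset.Nonempty := by
  by_contra h
  have h_leaf : ∀ v, G.degree v = 1 := by
    simpa [interiorFinset, filter_eq_empty_iff] using h
  have h_vert : Fintype.card V = 2 * #G.edgeFinset := by
    simp [← sum_degrees_eq_twice_card_edges, h_leaf]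
  have := hconn.card_vert_le_card_edgeSet_add_one
  rw [Nat.card_eq_fintype_card, Nat.card_eq_fintype_card, ← edgeFinset_card] at this
  omega

end SimpleGraph

open SimpleGraph

/-- Faber–Krahn inequality for the first `1`-Dirichlet eigenvalue of a graph
with `n` edges. -/
theorem faber_krahn_p_one {V : Type*} [Fintype V] [DecidableEq V] (G : SimpleGraph V)
    (n : ℕ) (hn : 4 ≤ n) (hcard : G.edgeFinset.card = n) (hconn : G.Connected)
    (hbd : ∃ v, G.degree v = 1) :
    lambda1 G 1 ≥ 1 / ((n : ℝ) - 1) := by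
  have hB : G.boundaryFinset.Nonempty := by simpa [boundaryFinset, filter_nonempty_iff] using hbd
  have hΩ : G.interiorFinset.Nonempty := hconn.interiorFinset_nonempty (by omega)
  have h_card : #G.interiorFinset + 1 ≤ n := by
    have := hconn.two_mul_card_interiorFinset_add_card_boundaryFinset_le hB
    have := hB.card_pos
    omega
  have h_card_real : (#G.interiorFinset : ℝ) + 1 ≤ n := by exact_mod_cast h_card
  calc 1 / ((n : ℝ) - 1) ≤ 1 / (#G.interiorFinset : ℝ) :=
        one_div_le_one_div_of_le (by exact_mod_cast hΩ.card_pos) (by linarith)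
    _ ≤ lambda1 G 1 := hconn.one_div_card_interiorFinset_le_lambda1 hB hΩ
end
end

section
/- Let p ≥ 1 and let G be a finite simple connected graph whose boundary B(G) (the set of vertices of degree one) is nonempty. Then λ_{1,p}(G) ≤ h_D(G), where h_D(G) is the Dirichlet Cheeger constant of G. -/
open scoped Classical

noncomputable section

/-- The first `p`-Dirichlet eigenvalue is at most the Dirichlet Cheeger constant. -/
theorem lambda1_le_cheeger {V : Type*} [Fintype V] [DecidableEq V] (G : SimpleGraph V)
    (hconn : G.Connected) (hbd : ∃ v, G.degree v = 1) {p : ℝ} (hp : 1 ≤ p) :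
    lambda1 G p ≤ dCheeger G := by
  classical
  have hp0 : p ≠ 0 := by linarith
  -- every vertex has positive degree
  have hdegpos : ∀ v : V, 0 < G.degree v := by
    intro v
    obtain ⟨w, hw⟩ := hbd
    rw [SimpleGraph.degree_pos_iff_exists_adj]
    by_cases hvw : v = w
    · subst hvw
      have : 0 < G.degree v := by omega
      rwa [SimpleGraph.degree_pos_iff_exists_adj] at this
    · obtain ⟨q⟩ := hconn.preconnected v w
      cases q with
      | nil => exact absurd rfl hvw
      | cons h _ => exact ⟨_, h⟩
  by_cases h2 : ∃ v, 2 ≤ G.degree v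
  · -- main case: the Cheeger set is nonempty and contained (via indicators) in the Rayleigh set
    obtain ⟨v0, hv0⟩ := h2
    have key : ∀ U : Finset V, U.Nonempty → (∀ v ∈ U, 2 ≤ G.degree v) →
        ((crossEdges G U).card : ℝ) / U.card ∈
          {r | ∃ f : V → ℝ, f ≠ 0 ∧ (∀ v, G.degree v = 1 → f v = 0) ∧ r = rayleigh G p f} := by
      intro U hUne hUdeg
      set f : V → ℝ := fun v => if v ∈ U then (1:ℝ) else 0 with hf
      refine ⟨f, ?_, ?_, ?_⟩
      · obtain ⟨u, hu⟩ := hUne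
        intro hf0
        have := congrFun hf0 u
        simp [hf, hu] at this
      · intro v hv
        have : v ∉ U := fun hvU => by have := hUdeg v hvU; omega
        simp [hf, this]
      · have hden : ∑ v, |f v| ^ p = (U.card : ℝ) := by
          have hv : ∀ v : V, |f v| ^ p = if v ∈ U then (1:ℝ) else 0 := by
            intro v
            by_cases h : v ∈ U <;> simp [hf, h, Real.zero_rpow hp0, Real.one_rpow]
          rw [Finset.sum_congr rfl fun v _ => hv v, Finset.sum_ite, Finset.sum_const,
            Finset.sum_const]
          simp [Finset.filter_mem_eq_inter]
        have hterm : ∀ e : Sym2 V, edgeTerm p f e =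
            if Sym2.lift ⟨fun x y => (x ∈ U ∧ y ∉ U) ∨ (x ∉ U ∧ y ∈ U),
              fun x y => by simp only [eq_iff_iff]; tauto⟩ e then (1:ℝ) else 0 := by
          intro e
          induction e using Sym2.ind with
          | _ x y =>
            by_cases hx : x ∈ U <;> by_cases hy : y ∈ U <;>
              simp [edgeTerm, hf, hx, hy, Real.zero_rpow hp0, Real.one_rpow]
        have hnum : ∑ e ∈ G.edgeFinset, edgeTerm p f e = ((crossEdges G U).card : ℝ) := by
          rw [Finset.sum_congr rfl fun e _ => hterm e, Finset.sum_ite, Finset.sum_const,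
            Finset.sum_const, crossEdges]
          simp
        rw [rayleigh, hden, hnum]
    -- nonemptiness of the Cheeger set
    have hBne : {r | ∃ U : Finset V, U.Nonempty ∧ (∀ v ∈ U, 2 ≤ G.degree v) ∧
        r = ((crossEdges G U).card : ℝ) / U.card}.Nonempty := by
      exact ⟨_, {v0}, Finset.singleton_nonempty v0,
        fun v hv => by rw [Finset.mem_singleton] at hv; subst hv; exact hv0, rfl⟩
    -- the Rayleigh set is bounded below by 0
    have hAbdd : BddBelow {r | ∃ f : V → ℝ, f ≠ 0 ∧ (∀ v, G.degree v = 1 → f v = 0) ∧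
        r = rayleigh G p f} := by
      refine ⟨0, fun r hr => ?_⟩
      obtain ⟨f, -, -, rfl⟩ := hr
      apply div_nonneg
      · refine Finset.sum_nonneg fun e _ => ?_
        induction e using Sym2.ind with
        | _ x y => exact Real.rpow_nonneg (abs_nonneg _) p
      · exact Finset.sum_nonneg fun v _ => Real.rpow_nonneg (abs_nonneg _) p
    refine csInf_le_csInf hAbdd hBne ?_
    rintro r ⟨U, hUne, hUdeg, rfl⟩
    exact key U hUne hUdeg
  · -- degenerate case: every vertex has degree 1, both sets are empty
    push_neg at h2
    have hdeg1 : ∀ v, G.degree v = 1 := fun v => by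
      have := hdegpos v; have := h2 v; omega
    have hA : {r | ∃ f : V → ℝ, f ≠ 0 ∧ (∀ v, G.degree v = 1 → f v = 0) ∧
        r = rayleigh G p f} = ∅ := by
      ext r
      simp only [Set.mem_setOf_eq, Set.mem_empty_iff_false, iff_false]
      rintro ⟨f, hf0, hfv, -⟩
      exact hf0 (funext fun v => hfv v (hdeg1 v))
    have hB : {r | ∃ U : Finset V, U.Nonempty ∧ (∀ v ∈ U, 2 ≤ G.degree v) ∧
        r = ((crossEdges G U).card : ℝ) / U.card} = ∅ := by
      ext r
      simp only [Set.mem_setOf_eq, Set.mem_empty_iff_false, iff_false]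
      rintro ⟨U, ⟨u, hu⟩, hUdeg, -⟩
      have := hUdeg u hu
      have := hdeg1 u
      omega
    rw [lambda1, dCheeger, hA, hB]
end
end
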